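/- In the deterministic-tree setup: for every R_c-limit point v0 and any two vertices v1, v2 ∈ P_{v0}, either v1 lies in the T-cone of v2 or v2 lies in the T-cone of v1. -/

import Mathlib

/-- Edge relation of the reversal `R(G)` of a graph `G` with edge set `E` over
the color set `D`: colors are `D ⊕ D` (original colors `Sum.inl d` and fresh
inverse colors `Sum.inr d = d⁻`). -/
def RevEdge {V D : Type*} (E : Set (V × D × V)) : V → (D ⊕ D) → V → Prop
  | v, Sum.inl d, w => (v, d, w) ∈ E
  | v, Sum.inr d, w => (w, d, v) ∈ E

/-- `Marks E v α w`: the word `α` over `D ⊕ D⁻` marks a path from `v` to `w`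
in the reversal `R(G)` of the graph with edge set `E`. -/
def Marks {V D : Type*} (E : Set (V × D × V)) : V → List (D ⊕ D) → V → Prop
  | v, [], w => v = w
  | v, c :: α, w => ∃ u, RevEdge E v c u ∧ Marks E u α w

/-- `IsEdgePath E v l w`: the list of edges `l` forms a directed path from `v`
to `w` in the graph with edge set `E`. -/
def IsEdgePath {V D : Type*} (E : Set (V × D × V)) : V → List (V × D × V) → V → Prop
  | v, [], w => v = w
  | v, e :: l, w => e ∈ E ∧ e.1 = v ∧ IsEdgePath E e.2.2 l w

/-- A graph is a tree if it has a root from which every vertex is reachable by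
a unique directed path. -/
def IsTree {V D : Type*} (E : Set (V × D × V)) : Prop :=
  ∃ r : V, ∀ v : V, ∃! l : List (V × D × V), IsEdgePath E r l v

/-- The cone of a vertex `v`: the set of vertices reachable from `v` by a
directed path (including `v` itself). -/
def Cone {V D : Type*} (E : Set (V × D × V)) (v : V) : Set V :=
  {w | ∃ l : List (V × D × V), IsEdgePath E v l w}

/-- `AutRun Δ q α q'`: the nondeterministic finite automaton with transition
relation `Δ` can go from state `q` to state `q'` reading the word `α`. -/
def AutRun {D Q : Type*} (Δ : Set (Q × (D ⊕ D) × Q)) : Q → List (D ⊕ D) → Q → Prop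
  | q, [], q' => q = q'
  | q, c :: α, q' => ∃ q'', (q, c, q'') ∈ Δ ∧ AutRun Δ q'' α q'

/-- The automaton with transition relation `Δ` can switch from state `q1` to
state `q2` on a path from `v1` to `v2`: some word over `D ⊕ D⁻` marks a path
from `v1` to `v2` in `R(T)` and takes the automaton from `q1` to `q2`. -/
def Switch {V D Q : Type*} (E : Set (V × D × V)) (Δ : Set (Q × (D ⊕ D) × Q))
    (q1 q2 : Q) (v1 v2 : V) : Prop :=
  ∃ α : List (D ⊕ D), Marks E v1 α v2 ∧ AutRun Δ q1 α q2

/-- The vertex-pair type of `(v1, v2)`: the pair of sets of state pairs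
`(q1, q2)` such that the automaton can switch from `q1` to `q2` on a path from
`v1` to `v2` (resp. from `v2` to `v1`). -/
def pairType {V D Q : Type*} (E : Set (V × D × V)) (Δ : Set (Q × (D ⊕ D) × Q))
    (v1 v2 : V) : Set (Q × Q) × Set (Q × Q) :=
  ({q | Switch E Δ q.1 q.2 v1 v2}, {q | Switch E Δ q.1 q.2 v2 v1})

/-- A graph is deterministic if for every vertex and color there is at most
one outgoing edge of that color. -/
def IsDeterministic {V D : Type*} (E : Set (V × D × V)) : Prop :=
  ∀ (v : V) (d : D) (w w' : V), (v, d, w) ∈ E → (v, d, w') ∈ E → w = w'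

/-- `v0` is a limit point of the strict (well-)order `R`: it is not the least
element and it is the supremum of the elements strictly below it. -/
def IsLimitPt {V : Type*} (R : V → V → Prop) (v0 : V) : Prop :=
  (∃ v, R v v0) ∧ ∀ v, R v v0 → ∃ w, R v w ∧ R w v0

/-- A set `B` is `R`-cofinal in `v0`: all its elements are strictly `R`-below
`v0` and `sup_R B = v0`. -/
def CofinalIn {V : Type*} (R : V → V → Prop) (B : Set V) (v0 : V) : Prop :=
  (∀ b ∈ B, R b v0) ∧ ∀ v, R v v0 → ∃ b ∈ B, (b = v ∨ R v b)

/-- `S_{v0}`: the set of vertices whose `T`-cone contains a subset cofinal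
in `v0`. -/
def Sset {V D : Type*} (E : Set (V × D × V)) (R : V → V → Prop) (v0 : V) : Set V :=
  {v | ∃ B ⊆ Cone E v, CofinalIn R B v0}

/-- `P_{v0}`: the set of vertices of `S_{v0}` whose `T`-cone does not
contain `v0`. -/
def Pset {V D : Type*} (E : Set (V × D × V)) (R : V → V → Prop) (v0 : V) : Set V :=
  {v | v ∈ Sset E R v0 ∧ v0 ∉ Cone E v}

/-!
If neither of `v1`, `v2` lies in the other's cone, their cones are disjoint, since `T` is a tree.
Pick `B1 ⊆ Cone v1` and `B2 ⊆ Cone v2` cofinal in `v0`. Alternating between them yields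
`b₀ < b₀' < b₁ < b₁' < ⋯` in `R_c` with `bₙ ∈ B1` and `bₙ' ∈ B2`. In a tree the only edge
entering the cone of `v2` from outside ends at `v2`, so every witnessing run from `bₙ` to `bₙ'`
visits `v2`, in some state `qₙ`. As there are finitely many states, `qᵢ = qⱼ` for some `i < j`;
gluing the run from `bⱼ` to `v2` with the one from `v2` to `bᵢ'` gives `bⱼ R_c bᵢ'`,
contradicting `bᵢ' R_c bⱼ`.
-/

section Paths

variable {V D : Type*} {E : Set (V × D × V)}

theorem isEdgePath_append {a b : V} {l m : List (V × D × V)} :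
    IsEdgePath E a (l ++ m) b ↔ ∃ u, IsEdgePath E a l u ∧ IsEdgePath E u m b := by
  induction l generalizing a with
  | nil => exact ⟨fun h => ⟨a, rfl, h⟩, fun ⟨_, hau, h⟩ => hau ▸ h⟩
  | cons e l ih =>
    constructor
    · rintro ⟨he, rfl, h⟩
      obtain ⟨u, hl, hm⟩ := ih.mp h
      exact ⟨u, ⟨he, rfl, hl⟩, hm⟩
    · rintro ⟨u, ⟨he, rfl, hl⟩, hm⟩
      exact ⟨he, rfl, ih.mpr ⟨u, hl, hm⟩⟩

theorem IsEdgePath.target_unique {a u u' : V} {l : List (V × D × V)}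
    (h : IsEdgePath E a l u) (h' : IsEdgePath E a l u') : u = u' := by
  induction l generalizing a with
  | nil => exact h.symm.trans h'
  | cons e l ih => exact ih h.2.2 h'.2.2

theorem mem_cone_trans {v x y : V} (hx : x ∈ Cone E v) (hy : y ∈ Cone E x) : y ∈ Cone E v := by
  obtain ⟨l, hl⟩ := hx
  obtain ⟨m, hm⟩ := hy
  exact ⟨l ++ m, isEdgePath_append.mpr ⟨x, hl, hm⟩⟩

theorem mem_cone_of_edge {v x y : V} {d : D} (hx : x ∈ Cone E v) (h : (x, d, y) ∈ E) :
    y ∈ Cone E v :=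
  mem_cone_trans hx ⟨[(x, d, y)], h, rfl, rfl⟩

end Paths

namespace IsTree

variable {V D : Type*} {E : Set (V × D × V)} (hT : IsTree E)
include hT

theorem source_unique {u p a : V} {d d' : D} (hu : (u, d, a) ∈ E) (hp : (p, d', a) ∈ E) :
    u = p := by
  obtain ⟨r, hr⟩ := hT
  obtain ⟨lu, hlu, -⟩ := hr u
  obtain ⟨lp, hlp, -⟩ := hr p
  have hpath_u : IsEdgePath E r (lu ++ [(u, d, a)]) a :=
    isEdgePath_append.mpr ⟨u, hlu, hu, rfl, rfl⟩
  have hpath_p : IsEdgePath E r (lp ++ [(p, d', a)]) a :=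
    isEdgePath_append.mpr ⟨p, hlp, hp, rfl, rfl⟩
  have hlast := congrArg List.getLast? ((hr a).unique hpath_u hpath_p)
  simp only [List.getLast?_concat, Option.some.injEq, Prod.mk.injEq] at hlast
  exact hlast.1

theorem mem_cone_of_edge_of_ne {v a u : V} {d : D} (ha : a ∈ Cone E v) (hne : a ≠ v)
    (h : (u, d, a) ∈ E) : u ∈ Cone E v := by
  obtain ⟨l, hl⟩ := ha
  obtain rfl | ⟨l', ⟨p, d', a'⟩, rfl⟩ := List.eq_nil_or_concat l
  · exact absurd hl.symm hne
  · rw [List.concat_eq_append] at hl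
    obtain ⟨p', hl', he, rfl, rfl⟩ := isEdgePath_append.mp hl
    exact hT.source_unique h he ▸ ⟨l', hl'⟩

theorem cone_comparable_of_mem {v1 v2 x : V} (h1 : x ∈ Cone E v1) (h2 : x ∈ Cone E v2) :
    v1 ∈ Cone E v2 ∨ v2 ∈ Cone E v1 := by
  obtain ⟨r, hr⟩ := hT
  obtain ⟨m1, hm1⟩ := h1
  obtain ⟨m2, hm2⟩ := h2
  obtain ⟨l1, hl1, -⟩ := hr v1
  obtain ⟨l2, hl2, -⟩ := hr v2
  have heq : l1 ++ m1 = l2 ++ m2 :=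
    (hr x).unique (isEdgePath_append.mpr ⟨v1, hl1, hm1⟩) (isEdgePath_append.mpr ⟨v2, hl2, hm2⟩)
  rcases List.append_eq_append_iff.mp heq with ⟨l, rfl, -⟩ | ⟨l, rfl, -⟩
  · obtain ⟨u, hu, hl⟩ := isEdgePath_append.mp hl2
    exact .inr ⟨l, hu.target_unique hl1 ▸ hl⟩
  · obtain ⟨u, hu, hl⟩ := isEdgePath_append.mp hl1
    exact .inl ⟨l, hu.target_unique hl2 ▸ hl⟩

theorem exists_marks_split_of_enter_cone {v a b : V} {α : List (D ⊕ D)} (h : Marks E a α b)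
    (ha : a ∉ Cone E v) (hb : b ∈ Cone E v) :
    ∃ β γ, α = β ++ γ ∧ Marks E a β v ∧ Marks E v γ b := by
  induction α generalizing a with
  | nil => exact absurd (h ▸ hb) ha
  | cons c α ih =>
    obtain ⟨u, hedge, hmarks⟩ := h
    by_cases hu : u ∈ Cone E v
    · have huv : u = v := by
        cases c with
        | inl d => exact by_contra fun hne => ha (hT.mem_cone_of_edge_of_ne hu hne hedge)
        | inr d => exact absurd (mem_cone_of_edge hu hedge) ha
      subst huv
      exact ⟨[c], α, rfl, ⟨u, hedge, rfl⟩, hmarks⟩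
    · obtain ⟨β, γ, rfl, hβ, hγ⟩ := ih hmarks hu
      exact ⟨c :: β, γ, rfl, ⟨u, hedge, hβ⟩, hγ⟩

end IsTree

section Runs

variable {V D Q : Type*} {E : Set (V × D × V)} {Δ : Set (Q × (D ⊕ D) × Q)}

theorem Marks.append {a b c : V} {α β : List (D ⊕ D)} (h1 : Marks E a α b)
    (h2 : Marks E b β c) : Marks E a (α ++ β) c := by
  induction α generalizing a with
  | nil => exact h1 ▸ h2
  | cons x α ih =>
    obtain ⟨u, he, hm⟩ := h1
    exact ⟨u, he, ih hm⟩

theorem autRun_append {q q'' : Q} {α β : List (D ⊕ D)} :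
    AutRun Δ q (α ++ β) q'' ↔ ∃ q', AutRun Δ q α q' ∧ AutRun Δ q' β q'' := by
  induction α generalizing q with
  | nil => exact ⟨fun h => ⟨q, rfl, h⟩, fun ⟨_, hq, h⟩ => hq ▸ h⟩
  | cons x α ih =>
    constructor
    · rintro ⟨p, hp, hr⟩
      obtain ⟨q', hq1, hq2⟩ := ih.mp hr
      exact ⟨q', ⟨p, hp, hq1⟩, hq2⟩
    · rintro ⟨q', ⟨p, hp, hq1⟩, hq2⟩
      exact ⟨p, hp, ih.mpr ⟨q', hq1, hq2⟩⟩

theorem Switch.trans {p q s : Q} {a b c : V} (h1 : Switch E Δ p q a b)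
    (h2 : Switch E Δ q s b c) : Switch E Δ p s a c := by
  obtain ⟨α, hm1, hr1⟩ := h1
  obtain ⟨β, hm2, hr2⟩ := h2
  exact ⟨α ++ β, hm1.append hm2, autRun_append.mpr ⟨q, hr1, hr2⟩⟩

theorem IsTree.exists_switch_split_of_enter_cone (hT : IsTree E) {q q'' : Q} {v a b : V}
    (h : Switch E Δ q q'' a b) (ha : a ∉ Cone E v) (hb : b ∈ Cone E v) :
    ∃ q', Switch E Δ q q' a v ∧ Switch E Δ q' q'' v b := by
  obtain ⟨α, hm, hr⟩ := h
  obtain ⟨β, γ, rfl, hβ, hγ⟩ := hT.exists_marks_split_of_enter_cone hm ha hb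
  obtain ⟨q', hq1, hq2⟩ := autRun_append.mp hr
  exact ⟨q', ⟨β, hβ, hq1⟩, ⟨γ, hγ, hq2⟩⟩

end Runs

section Cofinal

variable {V : Type*} {R : V → V → Prop} {B B' : Set V} {v0 : V}

theorem CofinalIn.exists_rel_of_notMem (hB : CofinalIn R B v0) {x : V} (hx : R x v0)
    (hxB : x ∉ B) : ∃ b ∈ B, R x b := by
  obtain ⟨b, hb, rfl | hxb⟩ := hB.2 x hx
  · exact absurd hb hxB
  · exact ⟨b, hb, hxb⟩

theorem exists_interleaving_of_cofinalIn [IsTrans V R] (hB : CofinalIn R B v0)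
    (hB' : CofinalIn R B' v0) (hdisj : Disjoint B B') (hv0 : ∃ v, R v v0) :
    ∃ b b' : ℕ → V, (∀ n, b n ∈ B) ∧ (∀ n, b' n ∈ B') ∧ (∀ n, R (b n) (b' n)) ∧
      ∀ i j, i < j → R (b' i) (b j) := by
  obtain ⟨v, hv⟩ := hv0
  obtain ⟨x₀, hx₀, -⟩ := hB.2 v hv
  choose f hfB' hf using fun x : B =>
    hB'.exists_rel_of_notMem (hB.1 x x.2) (Set.disjoint_left.mp hdisj x.2)
  choose g hgB hg using fun y : B' =>
    hB.exists_rel_of_notMem (hB'.1 y y.2) (Set.disjoint_right.mp hdisj y.2)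
  let next : B → B := fun x => ⟨g ⟨f x, hfB' x⟩, hgB _⟩
  let b : ℕ → B := fun n => next^[n] ⟨x₀, hx₀⟩
  have hb_succ (n : ℕ) : b (n + 1) = next (b n) := Function.iterate_succ_apply' next n _
  have hb'b_succ (n : ℕ) : R (f (b n)) (b (n + 1)) := by
    rw [hb_succ]
    exact hg ⟨f (b n), hfB' _⟩
  refine ⟨fun n => b n, fun n => f (b n), fun n => (b n).2, fun n => hfB' _, fun n => hf _,
    fun i j hij => ?_⟩
  obtain rfl | hlt := (Nat.succ_le_of_lt hij).eq_or_lt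
  · exact hb'b_succ i
  · exact _root_.trans (hb'b_succ i) <| Nat.rel_of_forall_rel_succ_of_lt R
      (fun n => _root_.trans (hf (b n)) (hb'b_succ n)) hlt

end Cofinal

theorem Pset_cone_linear_general {V D Q : Type*} [Fintype Q]
    (E : Set (V × D × V)) (hTree : IsTree E)
    (Δ : Set (Q × (D ⊕ D) × Q)) (qI qc : Q)
    (hwo : IsWellOrder V (Switch E Δ qI qc))
    (v0 : V) (hlim : IsLimitPt (Switch E Δ qI qc) v0)
    (v1 v2 : V)
    (h1 : v1 ∈ Pset E (Switch E Δ qI qc) v0)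
    (h2 : v2 ∈ Pset E (Switch E Δ qI qc) v0) :
    v1 ∈ Cone E v2 ∨ v2 ∈ Cone E v1 := by
  obtain ⟨⟨B1, hB1, hcof1⟩, -⟩ := h1
  obtain ⟨⟨B2, hB2, hcof2⟩, -⟩ := h2
  by_contra hcomp
  have hdisj : Disjoint (Cone E v1) (Cone E v2) :=
    Set.disjoint_left.mpr fun x hx1 hx2 => hcomp (hTree.cone_comparable_of_mem hx1 hx2)
  obtain ⟨b, b', hb, hb', hbb', hb'b⟩ :=
    exists_interleaving_of_cofinalIn hcof1 hcof2 (hdisj.mono hB1 hB2) hlim.1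
  choose q hq1 hq2 using fun n =>
    hTree.exists_switch_split_of_enter_cone (hbb' n)
      (Set.disjoint_left.mp hdisj (hB1 (hb n))) (hB2 (hb' n))
  obtain ⟨i, j, hij, hq⟩ :=
    Set.finite_univ.exists_lt_map_eq_of_forall_mem (f := q) fun _ => Set.mem_univ _
  exact asymm (hb'b i j hij) ((hq1 j).trans (hq ▸ hq2 i))

/-- Deterministic-tree setup: `T` is a deterministic tree over a finite color
set `D`, `B` is a nondeterministic finite automaton over `D ⊕ D⁻` with
distinguished states `qI, qc`, and the relation
`R_c v1 v2 := B can switch from qI to qc on a path from v1 to v2 in R(T)`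
is a strict well-order on the vertices. Then for every `R_c`-limit point `v0`
and all `v1, v2 ∈ P_{v0}`, either `v1` lies in the `T`-cone of `v2` or `v2`
lies in the `T`-cone of `v1`. -/
theorem Pset_cone_linear {V D Q : Type*} [Fintype D] [Fintype Q]
    (E : Set (V × D × V)) (hTree : IsTree E) (hdet : IsDeterministic E)
    (Δ : Set (Q × (D ⊕ D) × Q)) (qI qc : Q)
    (hwo : IsWellOrder V (Switch E Δ qI qc))
    (v0 : V) (hlim : IsLimitPt (Switch E Δ qI qc) v0)
    (v1 v2 : V)
    (h1 : v1 ∈ Pset E (Switch E Δ qI qc) v0)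
    (h2 : v2 ∈ Pset E (Switch E Δ qI qc) v0) :
    v1 ∈ Cone E v2 ∨ v2 ∈ Cone E v1 :=
  Pset_cone_linear_general E hTree Δ qI qc hwo v0 hlim v1 v2 h1 h2
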